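/- arXiv:2502.05212 — 3 statements merged into one kernel-verified Lean document; each statement's English description precedes it below -/
import Mathlib

section
/- Let μ ∈ ℝ, σ > 0, and let f(x) = (1/(σ√(2π))) exp(−(1/2)((x−μ)/σ)²) be the density of the normal distribution with mean μ and standard deviation σ. Let Φ and φ denote the CDF and PDF of the standard normal distribution respectively. Then for every real r, with p = (r−μ)/σ, the second-order loss function satisfies (1/2) ∫_r^∞ (x−r)² f(x) dx = (1/2)((r−μ)² + σ²)(1−Φ(p)) − (σ/2) φ(p) (r−μ). -/
open MeasureTheory Set Real Filter Topology

/-- For the normal density with mean `μ` and standard deviation `σ > 0`, the second-order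
loss function satisfies
`(1/2) ∫_r^∞ (x-r)² f(x) dx = (1/2)((r-μ)² + σ²)(1-Φ(p)) - (σ/2)φ(p)(r-μ)` where
`p = (r-μ)/σ`, `Φ` is the standard normal CDF and `φ` the standard normal PDF. -/
theorem normal_second_order_loss (μ σ : ℝ) (hσ : 0 < σ)
    (f : ℝ → ℝ)
    (hf : f = fun x => (1 / (σ * Real.sqrt (2 * π))) * Real.exp (-(1 / 2) * ((x - μ) / σ) ^ 2))
    (Φ φ : ℝ → ℝ)
    (hΦ : Φ = fun p => ∫ t in Iic p, (1 / Real.sqrt (2 * π)) * Real.exp (-t ^ 2 / 2))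
    (hφ : φ = fun p => (1 / Real.sqrt (2 * π)) * Real.exp (-p ^ 2 / 2))
    (r : ℝ) :
    (1 / 2) * ∫ x in Ioi r, (x - r) ^ 2 * f x
      = (1 / 2) * ((r - μ) ^ 2 + σ ^ 2) * (1 - Φ ((r - μ) / σ))
        - (σ / 2) * φ ((r - μ) / σ) * (r - μ) := by
  have hσ0 : σ ≠ 0 := ne_of_gt hσ
  have hsqrt : Real.sqrt (2 * π) ≠ 0 := by
    positivity
  set p : ℝ := (r - μ) / σ with hp
  -- integrability of φ
  have hφint : Integrable φ := by
    have h0 : Integrable (fun t : ℝ => Real.exp (-(1/2 : ℝ) * t ^ 2)) :=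
      integrable_exp_neg_mul_sq (by norm_num)
    have := h0.const_mul (1 / Real.sqrt (2 * π))
    rw [hφ]
    convert this using 2 with t
    ring_nf
  have hφcont : Continuous φ := by
    rw [hφ]; fun_prop
  -- total mass 1
  have hφtotal : ∫ t : ℝ, φ t = 1 := by
    rw [hφ]
    rw [MeasureTheory.integral_const_mul]
    have : (fun t : ℝ => Real.exp (-t ^ 2 / 2)) = fun t : ℝ => Real.exp (-(1/2 : ℝ) * t ^ 2) := by
      funext t; ring_nf
    rw [this, integral_gaussian]
    rw [show (π / (1/2 : ℝ)) = 2 * π by ring]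
    field_simp
  -- Φ in terms of interval integral
  have hΦeq : ∀ y : ℝ, Φ y = Φ 0 + ∫ t in (0:ℝ)..y, φ t := by
    intro y
    have := intervalIntegral.integral_Iic_sub_Iic (μ := volume) (f := φ)
      hφint.integrableOn hφint.integrableOn (a := 0) (b := y)
    rw [hΦ]
    simp only [hφ] at this ⊢
    linarith [this]
  -- derivative of Φ
  have hΦderiv : ∀ y : ℝ, HasDerivAt Φ (φ y) y := by
    intro y
    have h1 : HasDerivAt (fun u : ℝ => Φ 0 + ∫ t in (0:ℝ)..u, φ t) (0 + φ y) y := by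
      refine (hasDerivAt_const y (Φ 0)).add ?_
      exact intervalIntegral.integral_hasDerivAt_right hφint.intervalIntegrable
        (hφcont.stronglyMeasurable.stronglyMeasurableAtFilter) hφcont.continuousAt
    rw [zero_add] at h1
    exact h1.congr_of_eventuallyEq (Filter.Eventually.of_forall fun u => hΦeq u)
  have hΦcont : Continuous Φ := by
    have : Differentiable ℝ Φ := fun y => (hΦderiv y).differentiableAt
    exact this.continuous
  -- Φ → 1 at +∞
  have hΦtendsto : Tendsto Φ atTop (𝓝 1) := by
    have h1 : Tendsto (fun y : ℝ => ∫ t in (0:ℝ)..y, φ t) atTop (𝓝 (∫ t in Ioi (0:ℝ), φ t)) :=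
      intervalIntegral_tendsto_integral_Ioi 0 hφint.integrableOn tendsto_id
    have h2 : Tendsto (fun y : ℝ => Φ 0 + ∫ t in (0:ℝ)..y, φ t) atTop
        (𝓝 (Φ 0 + ∫ t in Ioi (0:ℝ), φ t)) := tendsto_const_nhds.add h1
    have h3 : Φ 0 + ∫ t in Ioi (0:ℝ), φ t = 1 := by
      have := intervalIntegral.integral_Iic_add_Ioi (μ := volume) (b := (0:ℝ)) (f := φ)
        hφint.integrableOn hφint.integrableOn
      rw [hΦ]
      simp only [hφ] at this ⊢
      rw [this]
      simpa only [hφ] using hφtotal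
    rw [h3] at h2
    exact h2.congr (fun y => (hΦeq y).symm)
  -- derivative of φ
  have hφderiv : ∀ y : ℝ, HasDerivAt φ (-y * φ y) y := by
    intro y
    have h1 : HasDerivAt (fun t : ℝ => -t ^ 2 / 2) (-y) y := by
      have := ((hasDerivAt_pow 2 y).fun_neg).div_const 2
      refine this.congr_deriv ?_
      push_cast
      ring
    have h2 := (h1.exp).const_mul (1 / Real.sqrt (2 * π))
    simp only [hφ]
    refine h2.congr_deriv ?_
    ring
  -- φ → 0 at +∞, and y * φ y → 0
  have hexp0 : Tendsto (fun y : ℝ => Real.exp (-y ^ 2 / 2)) atTop (𝓝 0) := by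
    apply Real.tendsto_exp_atBot.comp
    have hb : Tendsto (fun y : ℝ => -(y - 2)) atTop atBot := by
      apply tendsto_neg_atBot_iff.mpr
      simpa [sub_eq_add_neg] using tendsto_atTop_add_const_right atTop (-2 : ℝ) tendsto_id
    apply tendsto_atBot_mono (fun y : ℝ => ?_) hb
    nlinarith [sq_nonneg (y - 1)]
  have hφ0 : Tendsto (fun y : ℝ => φ y) atTop (𝓝 0) := by
    rw [hφ]
    simpa using hexp0.const_mul (1 / Real.sqrt (2 * π))
  have hyφ0 : Tendsto (fun y : ℝ => y * φ y) atTop (𝓝 0) := by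
    have hub : Tendsto (fun y : ℝ => (1 / Real.sqrt (2 * π)) * (y ^ 1 * Real.exp (-y))) atTop
        (𝓝 ((1 / Real.sqrt (2*π)) * 0)) :=
      tendsto_const_nhds.mul (tendsto_pow_mul_exp_neg_atTop_nhds_zero 1)
    rw [mul_zero] at hub
    apply squeeze_zero' ?_ ?_ hub
    · filter_upwards [eventually_ge_atTop (0:ℝ)] with y hy
      rw [hφ]
      positivity
    · filter_upwards [eventually_ge_atTop (2:ℝ)] with y hy
      rw [hφ]
      have h1 : Real.exp (-y ^ 2 / 2) ≤ Real.exp (-y) := by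
        apply Real.exp_le_exp.mpr
        nlinarith
      have hy0 : (0:ℝ) ≤ y := by linarith
      have hc : (0:ℝ) ≤ 1 / Real.sqrt (2 * π) := by positivity
      calc y * (1 / Real.sqrt (2 * π) * Real.exp (-y ^ 2 / 2))
          ≤ y * (1 / Real.sqrt (2 * π) * Real.exp (-y)) := by
            apply mul_le_mul_of_nonneg_left (mul_le_mul_of_nonneg_left h1 hc) hy0
        _ = 1 / Real.sqrt (2 * π) * (y ^ 1 * Real.exp (-y)) := by ring
  -- the antiderivative
  set F : ℝ → ℝ := fun x =>
    σ ^ 2 * ((1 + p ^ 2) * Φ ((x - μ) / σ) + (2 * p - (x - μ) / σ) * φ ((x - μ) / σ)) with hF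
  have hu : ∀ x : ℝ, HasDerivAt (fun x : ℝ => (x - μ) / σ) (1 / σ) x := by
    intro x
    simpa using ((hasDerivAt_id x).sub_const μ).div_const σ
  have hFderiv : ∀ x : ℝ, HasDerivAt F ((x - r) ^ 2 * f x) x := by
    intro x
    have hΦu : HasDerivAt (fun x : ℝ => Φ ((x - μ) / σ)) (φ ((x - μ) / σ) * (1 / σ)) x :=
      (hΦderiv _).comp x (hu x)
    have hφu : HasDerivAt (fun x : ℝ => φ ((x - μ) / σ))
        ((-((x - μ) / σ) * φ ((x - μ) / σ)) * (1 / σ)) x := (hφderiv _).comp x (hu x)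
    have hlin : HasDerivAt (fun x : ℝ => 2 * p - (x - μ) / σ) (0 - 1 / σ) x :=
      (hasDerivAt_const x (2 * p)).sub (hu x)
    have hprod := hlin.mul hφu
    have hsum := ((hasDerivAt_const x (1 + p ^ 2)).mul hΦu).add hprod
    have hfin := hsum.const_mul (σ ^ 2)
    rw [hF]
    refine hfin.congr_deriv ?_
    simp only [hf, hφ, hp]
    have hexp : Real.exp (-(1 / 2) * ((x - μ) / σ) ^ 2) = Real.exp (-((x - μ) / σ) ^ 2 / 2) := by
      ring_nf
    rw [hexp]
    field_simp
    ring
  -- nonnegativity of the integrand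
  have hnonneg : ∀ x ∈ Ioi r, (0:ℝ) ≤ (x - r) ^ 2 * f x := by
    intro x _
    rw [hf]
    positivity
  -- limit of F at +∞
  have huTop : Tendsto (fun x : ℝ => (x - μ) / σ) atTop atTop := by
    apply Tendsto.atTop_div_const hσ
    exact tendsto_atTop_add_const_right atTop (-μ) tendsto_id
  have hFlim : Tendsto F atTop (𝓝 (σ ^ 2 * (1 + p ^ 2))) := by
    have hinner : Tendsto (fun y : ℝ => (1 + p ^ 2) * Φ y + (2 * p - y) * φ y) atTop
        (𝓝 ((1 + p ^ 2) * 1 + 0)) := by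
      refine (tendsto_const_nhds.mul hΦtendsto).add ?_
      have h2 : Tendsto (fun y : ℝ => 2 * p * φ y - y * φ y) atTop (𝓝 (2 * p * 0 - 0)) :=
        (tendsto_const_nhds.mul hφ0).sub hyφ0
      simp only [mul_zero, sub_zero] at h2
      exact h2.congr (fun y => by ring)
    have := (hinner.comp huTop).const_mul (σ ^ 2)
    simp only [mul_one, add_zero] at this
    exact this
  -- compute the integral
  have hint : ∫ x in Ioi r, (x - r) ^ 2 * f x = σ ^ 2 * (1 + p ^ 2) - F r :=
    integral_Ioi_of_hasDerivAt_of_nonneg' (fun x _ => hFderiv x) hnonneg hFlim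
  have hFr : F r = σ ^ 2 * ((1 + p ^ 2) * Φ p + (2 * p - p) * φ p) := rfl
  rw [hint, hFr]
  have hσp : σ * p = r - μ := by
    rw [hp]; field_simp
  have hp2 : σ ^ 2 * p ^ 2 = (r - μ) ^ 2 := by
    rw [← hσp]; ring
  linear_combination ((1 - Φ p) / 2) * hp2 - (σ * φ p / 2) * hσp
end

section
/- Let λ > 0 and let f(x) = λ^x e^{−λ}/x! for x ∈ ℕ be the probability mass function of the Poisson distribution with parameter λ, with CDF F(r) = Σ_{x=0}^{r} f(x) for r ∈ ℕ. Then for every natural number r, the first-order loss function satisfies Σ_{x ≥ r} (x−r) f(x) = −(r−λ)(1 − F(r)) + λ f(r). -/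
/-- For the Poisson PMF `f(x) = λ^x e^{-λ}/x!` with parameter `λ > 0` and CDF
`F(r) = ∑_{x=0}^r f(x)`, the first-order loss function satisfies
`∑_{x ≥ r} (x-r) f(x) = -(r-λ)(1 - F(r)) + λ f(r)` for every natural number `r`. -/
theorem poisson_first_order_loss (lam : ℝ) (hlam : 0 < lam)
    (f : ℕ → ℝ)
    (hf : f = fun x => lam ^ x * Real.exp (-lam) / (Nat.factorial x))
    (F : ℕ → ℝ)
    (hF : F = fun r => ∑ x ∈ Finset.range (r + 1), f x)
    (r : ℕ) :
    (∑' x : ℕ, if r ≤ x then ((x : ℝ) - (r : ℝ)) * f x else 0)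
      = -((r : ℝ) - lam) * (1 - F r) + lam * f r := by
  -- basic summability of the series lam^x / x!
  have hs0 : Summable (fun x : ℕ => lam ^ x / (Nat.factorial x : ℝ)) :=
    Real.summable_pow_div_factorial lam
  have hsum : Summable f := by
    rw [hf]
    have := hs0.mul_right (Real.exp (-lam))
    convert this using 2 with x
    · rfl
    ring
  -- total mass is 1
  have htot : ∑' x, f x = 1 := by
    rw [hf]
    have h1 : (fun x : ℕ => lam ^ x * Real.exp (-lam) / (Nat.factorial x))
        = fun x : ℕ => (lam ^ x / (Nat.factorial x : ℝ)) * Real.exp (-lam) := by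
      funext x; ring
    rw [h1, tsum_mul_right]
    have h2 : ∑' x : ℕ, lam ^ x / (Nat.factorial x : ℝ) = Real.exp lam := by
      rw [Real.exp_eq_exp_ℝ, NormedSpace.exp_eq_tsum_div]
    rw [h2, ← Real.exp_add]
    simp
  -- recurrence: (n+1) f(n+1) = lam * f n
  have hrec : ∀ n : ℕ, ((n : ℝ) + 1) * f (n + 1) = lam * f n := by
    intro n
    rw [hf]
    simp only [Nat.factorial_succ]
    have hfac : (Nat.factorial n : ℝ) ≠ 0 := by positivity
    push_cast
    field_simp
    ring
  -- summability of n ↦ n * f n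
  have hg : Summable (fun n : ℕ => (n : ℝ) * f n) := by
    rw [← summable_nat_add_iff 1]
    have : (fun n : ℕ => ((n + 1 : ℕ) : ℝ) * f (n + 1)) = fun n => lam * f n := by
      funext n; push_cast; exact hrec n
    rw [this]
    exact hsum.mul_left lam
  -- tail sums
  set A : ℕ → ℝ := fun k => ∑' n, f (n + k) with hA
  have hsumA : ∀ k : ℕ, Summable (fun n => f (n + k)) := fun k =>
    (summable_nat_add_iff k).2 hsum
  -- LHS via shift
  have hshift : (∑' x : ℕ, if r ≤ x then ((x : ℝ) - (r : ℝ)) * f x else 0)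
      = ∑' n : ℕ, (n : ℝ) * f (n + r) := by
    have hinj : Function.Injective (fun n : ℕ => n + r) := add_left_injective r
    rw [← Function.Injective.tsum_eq hinj ?_]
    · apply tsum_congr
      intro n
      have : r ≤ n + r := by omega
      simp [this]
    · intro x hx
      by_contra hc
      simp only [Function.mem_support] at hx
      apply hx
      have : ¬ r ≤ x := by
        intro h
        exact hc ⟨x - r, by simp; omega⟩
      simp [this]
  -- summability of n ↦ (n:ℝ) * f (n + r)
  have hgr : Summable (fun n : ℕ => (n : ℝ) * f (n + r)) := by
    have h1 : Summable (fun n : ℕ => ((n + r : ℕ) : ℝ) * f (n + r)) :=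
      (summable_nat_add_iff r).2 hg
    have h2 : Summable (fun n : ℕ => (r : ℝ) * f (n + r)) := (hsumA r).mul_left _
    have := h1.sub h2
    convert this using 2 with n
    · rfl
    push_cast; ring
  -- key computation: ∑' n, n * f (n + r) = lam * A r - r * A (r + 1)
  have hkey : ∑' n : ℕ, (n : ℝ) * f (n + r) = lam * A r - (r : ℝ) * A (r + 1) := by
    rw [Summable.tsum_eq_zero_add hgr]
    simp only [Nat.cast_zero, zero_mul, zero_add, Nat.cast_add, Nat.cast_one]
    have heq : ∀ n : ℕ, ((n : ℝ) + 1) * f (n + 1 + r)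
        = lam * f (n + r) - (r : ℝ) * f (n + (r + 1)) := by
      intro n
      have h1 : ((n : ℝ) + (r : ℝ) + 1) * f (n + r + 1) = lam * f (n + r) := by
        have h := hrec (n + r)
        push_cast at h
        linarith [h]
      have h2 : n + 1 + r = n + r + 1 := by omega
      have h3 : n + (r + 1) = n + r + 1 := by omega
      rw [h2, h3]
      nlinarith [h1]
    calc ∑' n : ℕ, ((n : ℝ) + 1) * f (n + 1 + r)
        = ∑' n : ℕ, (lam * f (n + r) - (r : ℝ) * f (n + (r + 1))) := by
          exact tsum_congr heq
      _ = lam * A r - (r : ℝ) * A (r + 1) := by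
          rw [Summable.tsum_sub ((hsumA r).mul_left lam) ((hsumA (r + 1)).mul_left _),
            tsum_mul_left, tsum_mul_left]
  -- A r = f r + A (r+1)
  have hAr : A r = f r + A (r + 1) := by
    have := Summable.tsum_eq_zero_add (hsumA r)
    simpa only [zero_add, add_zero, hA, add_comm, add_assoc, add_left_comm] using this
  -- 1 - F r = A (r+1)
  have hFr : 1 - F r = A (r + 1) := by
    have := Summable.sum_add_tsum_nat_add (f := f) (r + 1) hsum
    rw [htot] at this
    rw [hF]
    simp only [hA]
    linarith [this]
  rw [hshift, hkey, hAr, hFr]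
  ring
end

section
/- Let λ > 0 and let f(x) = λ^x e^{−λ}/x! for x ∈ ℕ be the probability mass function of the Poisson distribution with parameter λ, with CDF F(r) = Σ_{x=0}^{r} f(x) for r ∈ ℕ. Then for every natural number r, the second-order loss function satisfies (1/2) Σ_{x ≥ r} (x−r)(x−r−1) f(x) = (1/2)(((r−λ)² + r)(1 − F(r)) − λ(r−λ) f(r)). -/
/-- For the Poisson PMF `f(x) = λ^x e^{-λ}/x!` with parameter `λ > 0` and CDF
`F(r) = ∑_{x=0}^r f(x)`, the second-order loss function satisfies
`(1/2) ∑_{x ≥ r} (x-r)(x-r-1) f(x) = (1/2)(((r-λ)² + r)(1 - F(r)) - λ(r-λ) f(r))`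
for every natural number `r`. -/
theorem poisson_second_order_loss (lam : ℝ) (hlam : 0 < lam)
    (f : ℕ → ℝ)
    (hf : f = fun x => lam ^ x * Real.exp (-lam) / (Nat.factorial x))
    (F : ℕ → ℝ)
    (hF : F = fun r => ∑ x ∈ Finset.range (r + 1), f x)
    (r : ℕ) :
    (1 / 2) * (∑' x : ℕ, if r ≤ x then ((x : ℝ) - (r : ℝ)) * ((x : ℝ) - (r : ℝ) - 1) * f x else 0)
      = (1 / 2) * ((((r : ℝ) - lam) ^ 2 + (r : ℝ)) * (1 - F r) - lam * ((r : ℝ) - lam) * f r) := by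
  -- summability of f
  have hfs : Summable f := by
    rw [hf]
    have := (Real.summable_pow_div_factorial lam).mul_right (Real.exp (-lam))
    convert this using 2 with x
    · rfl
    · ring
  -- recurrence
  have hrec : ∀ x : ℕ, ((x : ℝ) + 1) * f (x + 1) = lam * f x := by
    intro x
    simp only [hf, Nat.factorial_succ, pow_succ]
    push_cast
    have h1 : (x.factorial : ℝ) ≠ 0 := Nat.cast_ne_zero.2 x.factorial_ne_zero
    have h2 : (x : ℝ) + 1 ≠ 0 := by positivity
    field_simp
  -- total mass 1
  have htot : ∑' x, f x = 1 := by
    rw [hf]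
    have h1 : ∀ x : ℕ, lam ^ x * Real.exp (-lam) / (Nat.factorial x)
        = Real.exp (-lam) * (lam ^ x / (Nat.factorial x)) := fun x => by ring
    simp only [h1]
    rw [tsum_mul_left]
    have h2 : ∑' x : ℕ, lam ^ x / (Nat.factorial x) = Real.exp lam := by
      rw [Real.exp_eq_exp_ℝ, NormedSpace.exp_eq_tsum_div]
    rw [h2, ← Real.exp_add]
    simp
  set b : ℕ → ℝ := fun x => (x : ℝ) * f x with hb
  set a : ℕ → ℝ := fun x => (x : ℝ) * ((x : ℝ) - 1) * f x with ha
  have hbshift : ∀ x : ℕ, b (x + 1) = lam * f x := by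
    intro x; simp only [hb]; push_cast; exact hrec x
  have hashift : ∀ x : ℕ, a (x + 2) = lam ^ 2 * f x := by
    intro x
    simp only [ha]
    have h1 := hrec (x + 1)
    have h2 := hrec x
    push_cast at h1 ⊢
    have e : x + 1 + 1 = x + 2 := rfl
    rw [e] at h1
    linear_combination ((x : ℝ) + 1) * h1 + lam * h2
  -- summability of a and b
  have hbs : Summable b := by
    rw [← summable_nat_add_iff 1]
    simpa only [hbshift] using hfs.mul_left lam
  have has : Summable a := by
    rw [← summable_nat_add_iff 2]
    simpa only [hashift] using hfs.mul_left (lam ^ 2)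
  have h1 : Summable (fun n => a (n + r)) := (summable_nat_add_iff r).2 has
  have h2 : Summable (fun n => b (n + r)) := (summable_nat_add_iff r).2 hbs
  have h3 : Summable (fun n => f (n + r)) := (summable_nat_add_iff r).2 hfs
  set g : ℕ → ℝ := fun x =>
    if r ≤ x then ((x : ℝ) - (r : ℝ)) * ((x : ℝ) - (r : ℝ) - 1) * f x else 0 with hg
  have hgshift : ∀ n : ℕ, g (n + r)
      = a (n + r) - 2 * (r : ℝ) * b (n + r) + ((r : ℝ) ^ 2 + r) * f (n + r) := by
    intro n
    simp only [hg, ha, hb, if_pos (Nat.le_add_left r n)]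
    push_cast
    ring
  have hgsshift : Summable (fun n => g (n + r)) := by
    simp only [hgshift]
    exact (h1.sub (h2.mul_left (2 * (r : ℝ)))).add (h3.mul_left ((r : ℝ) ^ 2 + r))
  have hgs : Summable g := (summable_nat_add_iff r).1 hgsshift
  -- tail sums
  set Tr : ℝ := ∑' n, f (n + r) with hTr
  set v : ℝ := ∑' n, f (n + (r + 1)) with hv
  -- LHS tsum computation
  have e1 : ∑' x, g x = ∑' n, g (n + r) := by
    rw [← Summable.sum_add_tsum_nat_add r hgs]
    have : ∑ i ∈ Finset.range r, g i = 0 := by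
      apply Finset.sum_eq_zero
      intro i hi
      have hi' := Finset.mem_range.1 hi
      simp only [hg, if_neg (by omega : ¬ r ≤ i)]
    rw [this, zero_add]
  have e2 : ∑' n, g (n + r)
      = (∑' n, a (n + r)) - 2 * (r : ℝ) * (∑' n, b (n + r)) + ((r : ℝ) ^ 2 + r) * Tr := by
    rw [tsum_congr hgshift,
      Summable.tsum_add (h1.sub (h2.mul_left (2 * (r : ℝ)))) (h3.mul_left ((r : ℝ) ^ 2 + r)),
      Summable.tsum_sub h1 (h2.mul_left (2 * (r : ℝ))), tsum_mul_left, tsum_mul_left]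
  -- A
  have eA : ∑' n, a (n + r) = a r + a (r + 1) + lam ^ 2 * Tr := by
    rw [← Summable.sum_add_tsum_nat_add 2 h1]
    have : ∑' n, a (n + 2 + r) = lam ^ 2 * Tr := by
      rw [hTr, ← tsum_mul_left]
      refine tsum_congr fun n => ?_
      rw [show n + 2 + r = n + r + 2 by omega]
      exact hashift (n + r)
    rw [this]
    simp [Finset.sum_range_succ, Nat.add_comm 1 r]
  -- B
  have eB : ∑' n, b (n + r) = b r + lam * Tr := by
    rw [← Summable.sum_add_tsum_nat_add 1 h2]
    have : ∑' n, b (n + 1 + r) = lam * Tr := by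
      rw [hTr, ← tsum_mul_left]
      refine tsum_congr fun n => ?_
      rw [show n + 1 + r = n + r + 1 by omega]
      exact hbshift (n + r)
    rw [this]
    simp
  -- Tr = f r + v
  have eT : Tr = f r + v := by
    rw [hTr, ← Summable.sum_add_tsum_nat_add 1 h3, hv]
    congr 1
    · simp
    · exact tsum_congr fun n => by rw [show n + 1 + r = n + (r + 1) by omega]
  -- v = 1 - F r
  have eV : v = 1 - F r := by
    have := Summable.sum_add_tsum_nat_add (r + 1) hfs
    rw [htot] at this
    rw [hv, hF]
    linarith
  -- pointwise values
  have ear : a r = (r : ℝ) * ((r : ℝ) - 1) * f r := rfl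
  have ear1 : a (r + 1) = (r : ℝ) * lam * f r := by
    simp only [ha]
    push_cast
    linear_combination (r : ℝ) * hrec r
  have ebr : b r = (r : ℝ) * f r := rfl
  -- conclude
  show (1 / 2) * (∑' x, g x) = _
  rw [e1, e2, eA, eB, eT, eV, ear, ear1, ebr]
  ring
end
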